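/- Let k > 0, H ∈ ℝ, and let ĝ : ℝ → ℂ be a Schwartz function. Define u(x₁, x₂) = (1/(2π)) ∫_ℝ e^{iξx₁ + iβ(ξ)(x₂ − H)} ĝ(ξ) dξ. Then on the open half-plane {(x₁, x₂) ∈ ℝ² : x₂ > H} the function u is twice continuously differentiable and satisfies the Helmholtz equation ∂²u/∂x₁² + ∂²u/∂x₂² + k²u = 0. -/

import Mathlib

open Complex MeasureTheory

/-- The square-root symbol `β(ξ) = √(k² - ξ²)` for `|ξ| ≤ k` and `i√(ξ² - k²)` for `|ξ| > k`. -/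
noncomputable def betaSym (k ξ : ℝ) : ℂ :=
  if |ξ| ≤ k then ((Real.sqrt (k ^ 2 - ξ ^ 2) : ℝ) : ℂ)
  else Complex.I * ((Real.sqrt (ξ ^ 2 - k ^ 2) : ℝ) : ℂ)



lemma betaSym_sq (k ξ : ℝ) (h : 0 ≤ k) : betaSym k ξ ^ 2 = (k:ℂ)^2 - (ξ:ℂ)^2 := by
  unfold betaSym
  split_ifs with hle
  · have h2 : ξ^2 ≤ k^2 := by
      have := abs_nonneg ξ; nlinarith [_root_.sq_abs ξ]
    rw [← Complex.ofReal_pow, Real.sq_sqrt (by linarith)]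
    push_cast; ring
  · have h2 : k^2 ≤ ξ^2 := by
      have h3 : k < |ξ| := lt_of_not_ge hle
      nlinarith [_root_.sq_abs ξ, abs_nonneg ξ]
    have : (Complex.I * (Real.sqrt (ξ^2 - k^2) : ℂ))^2
        = -((Real.sqrt (ξ^2-k^2) : ℂ)^2) := by
      rw [mul_pow, Complex.I_sq]; ring
    rw [this, ← Complex.ofReal_pow, Real.sq_sqrt (by linarith)]
    push_cast; ring

lemma norm_betaSym_le (k ξ : ℝ) (hk : 0 ≤ k) : ‖betaSym k ξ‖ ≤ k + |ξ| := by
  unfold betaSym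
  split_ifs with hle
  · rw [Complex.norm_real, Real.norm_eq_abs, _root_.abs_of_nonneg (Real.sqrt_nonneg _)]
    calc Real.sqrt (k^2 - ξ^2) ≤ Real.sqrt (k^2) := by
          apply Real.sqrt_le_sqrt; nlinarith [sq_nonneg ξ]
      _ = k := Real.sqrt_sq hk
      _ ≤ k + |ξ| := by linarith [abs_nonneg ξ]
  · rw [norm_mul, Complex.norm_I, one_mul, Complex.norm_real, Real.norm_eq_abs,
      _root_.abs_of_nonneg (Real.sqrt_nonneg _)]
    calc Real.sqrt (ξ^2 - k^2) ≤ Real.sqrt (ξ^2) := by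
          apply Real.sqrt_le_sqrt; nlinarith [sq_nonneg k]
      _ = |ξ| := by rw [← _root_.sq_abs, Real.sqrt_sq (abs_nonneg _)]
      _ ≤ k + |ξ| := by linarith

lemma continuous_betaSym (k : ℝ) : Continuous (betaSym k) := by
  unfold betaSym
  apply Continuous.if_le
  · exact Complex.continuous_ofReal.comp ((continuous_const.sub (continuous_pow 2)).sqrt)
  · exact continuous_const.mul (Complex.continuous_ofReal.comp (((continuous_pow 2).sub continuous_const).sqrt))
  · exact _root_.continuous_abs
  · exact continuous_const
  · intro ξ h
    have h2 : ξ ^ 2 = k ^ 2 := by rw [← _root_.sq_abs ξ, h]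
    simp [h2]

noncomputable def Eker (k H : ℝ) (p : ℝ × ℝ) (ξ : ℝ) : ℂ :=
  Complex.exp (Complex.I * ξ * p.1 + Complex.I * betaSym k ξ * (p.2 - H))

lemma continuous_Eker (k H : ℝ) (p : ℝ × ℝ) : Continuous (Eker k H p) := by
  unfold Eker
  apply Complex.continuous_exp.comp
  apply Continuous.add
  · exact (continuous_const.mul Complex.continuous_ofReal).mul continuous_const
  · exact (continuous_const.mul (continuous_betaSym k)).mul continuous_const

lemma norm_Eker_le (k H : ℝ) (p : ℝ × ℝ) (ξ : ℝ) (hp : H ≤ p.2) : ‖Eker k H p ξ‖ ≤ 1 := by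
  unfold Eker
  rw [Complex.norm_exp]
  rw [Real.exp_le_one_iff]
  have h1 : (Complex.I * ξ * p.1).re = 0 := by simp
  have h2 : (Complex.I * betaSym k ξ * (p.2 - H)).re = (Complex.I * betaSym k ξ).re * (p.2 - H) := by
    rw [Complex.mul_re]
    simp
  have h3 : (Complex.I * betaSym k ξ).re ≤ 0 := by
    unfold betaSym
    split_ifs with h
    · simp
    · rw [show Complex.I * (Complex.I * ((Real.sqrt (ξ^2 - k^2) : ℝ) : ℂ))
          = -((Real.sqrt (ξ^2-k^2) : ℝ) : ℂ) by rw [← mul_assoc, Complex.I_mul_I]; ring]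
      simp [Real.sqrt_nonneg]
  rw [Complex.add_re, h1, h2, zero_add]
  have : 0 ≤ p.2 - H := by linarith
  nlinarith


noncomputable def Lmap (k : ℝ) (ξ : ℝ) : ℝ × ℝ →L[ℝ] ℂ :=
  (ContinuousLinearMap.fst ℝ ℝ ℝ).smulRight (Complex.I * ξ)
  + (ContinuousLinearMap.snd ℝ ℝ ℝ).smulRight (Complex.I * betaSym k ξ)

lemma hasFDerivAt_Eker (k H : ℝ) (ξ : ℝ) (q : ℝ × ℝ) :
    HasFDerivAt (fun q : ℝ × ℝ => Eker k H q ξ) (Eker k H q ξ • Lmap k ξ) q := by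
  have hlin : HasFDerivAt
      (fun q : ℝ × ℝ => Complex.I * ξ * q.1 + Complex.I * betaSym k ξ * (q.2 - H))
      (Lmap k ξ) q := by
    have heq : (fun q : ℝ × ℝ => Complex.I * ξ * q.1 + Complex.I * betaSym k ξ * (q.2 - H))
        = fun q : ℝ × ℝ => Lmap k ξ q + (-(Complex.I * betaSym k ξ * H)) := by
      funext q
      simp only [Lmap, ContinuousLinearMap.add_apply, ContinuousLinearMap.smulRight_apply,
        ContinuousLinearMap.coe_fst', ContinuousLinearMap.coe_snd', Complex.real_smul]
      ring
    rw [heq]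
    exact (Lmap k ξ).hasFDerivAt.add_const _
  exact hlin.cexp

lemma hasFDerivAt_integrand (k H : ℝ) (a b : ℂ) (ξ : ℝ) (q : ℝ × ℝ) :
    HasFDerivAt (fun q : ℝ × ℝ => a * Eker k H q ξ * b)
      ((ContinuousLinearMap.fst ℝ ℝ ℝ).smulRight (Complex.I * ξ * a * Eker k H q ξ * b)
       + (ContinuousLinearMap.snd ℝ ℝ ℝ).smulRight
           (Complex.I * betaSym k ξ * a * Eker k H q ξ * b)) q := by
  have h := ((hasFDerivAt_Eker k H ξ q).const_mul a).mul_const b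
  refine h.congr_fderiv ?_
  refine ContinuousLinearMap.ext fun v => ?_
  simp only [Lmap, ContinuousLinearMap.add_apply, ContinuousLinearMap.smulRight_apply,
    ContinuousLinearMap.coe_fst', ContinuousLinearMap.coe_snd', ContinuousLinearMap.coe_smul',
    Pi.smul_apply, Complex.real_smul, smul_eq_mul]
  push_cast
  ring

lemma integrable_poly_mul (g : SchwartzMap ℝ ℂ) (C : ℝ) (n : ℕ) :
    Integrable (fun ξ : ℝ => C * (1 + |ξ|) ^ n * ‖g ξ‖) := by
  have h1 : Integrable (fun ξ : ℝ => ‖g ξ‖) := g.integrable.norm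
  have h2 : Integrable (fun ξ : ℝ => ‖ξ‖ ^ n * ‖g ξ‖) := g.integrable_pow_mul volume n
  have h3 : Integrable (fun ξ : ℝ => |C| * 2 ^ n * (‖g ξ‖ + ‖ξ‖ ^ n * ‖g ξ‖)) :=
    (h1.add h2).const_mul _
  refine h3.mono' ((continuous_const.mul ((continuous_const.add _root_.continuous_abs).pow n)).mul g.continuous.norm).aestronglyMeasurable ?_
  filter_upwards with ξ
  rw [Real.norm_eq_abs]
  have hb : (1 + |ξ|) ^ n ≤ 2 ^ n * (1 + |ξ| ^ n) := by
    calc (1 + |ξ|) ^ n ≤ (2 * max 1 |ξ|) ^ n := by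
          gcongr
          rcases le_total |ξ| 1 with h | h
          · have := le_max_left (1:ℝ) |ξ|; linarith
          · have := le_max_right (1:ℝ) |ξ|; linarith
      _ = 2 ^ n * (max 1 |ξ|) ^ n := by rw [mul_pow]
      _ ≤ 2 ^ n * (1 + |ξ| ^ n) := by
          have hmax : (max 1 |ξ|) ^ n ≤ 1 + |ξ| ^ n := by
            rcases le_total |ξ| 1 with h | h
            · rw [max_eq_left h, one_pow]
              have : (0:ℝ) ≤ |ξ|^n := by positivity
              linarith
            · rw [max_eq_right h]
              linarith
          exact mul_le_mul_of_nonneg_left hmax (by positivity)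
  calc |C * (1 + |ξ|) ^ n * ‖g ξ‖| = |C| * (1 + |ξ|) ^ n * ‖g ξ‖ := by
        rw [abs_mul, abs_mul, _root_.abs_of_nonneg (by positivity : (0:ℝ) ≤ (1+|ξ|)^n),
          _root_.abs_of_nonneg (norm_nonneg _)]
    _ ≤ |C| * (2 ^ n * (1 + |ξ| ^ n)) * ‖g ξ‖ := mul_le_mul_of_nonneg_right (mul_le_mul_of_nonneg_left hb (abs_nonneg C)) (norm_nonneg (g ξ))
    _ = |C| * 2 ^ n * (‖g ξ‖ + ‖ξ‖ ^ n * ‖g ξ‖) := by rw [Real.norm_eq_abs]; ring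

noncomputable def Uw (k H : ℝ) (g : SchwartzMap ℝ ℂ) (w : ℝ → ℂ) (p : ℝ × ℝ) : ℂ :=
  ∫ ξ : ℝ, w ξ * Eker k H p ξ * g ξ

/-- polynomially bounded continuous weight -/
structure GoodW (w : ℝ → ℂ) (C : ℝ) (n : ℕ) : Prop where
  cont : Continuous w
  bound : ∀ ξ, ‖w ξ‖ ≤ C * (1 + |ξ|) ^ n

lemma GoodW.C_nonneg {w C n} (h : GoodW w C n) : 0 ≤ C := by
  have h1 := h.bound 0
  have h0 := norm_nonneg (w 0)
  simp only [abs_zero, add_zero, one_pow, mul_one] at h1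
  linarith

lemma norm_integrand_le {w : ℝ → ℂ} {C n} (hw : GoodW w C n) (k H : ℝ) (g : SchwartzMap ℝ ℂ)
    (p : ℝ × ℝ) (hp : H ≤ p.2) (ξ : ℝ) :
    ‖w ξ * Eker k H p ξ * g ξ‖ ≤ C * (1 + |ξ|) ^ n * ‖g ξ‖ := by
  rw [norm_mul, norm_mul]
  have h1 := hw.bound ξ
  have h2 := norm_Eker_le k H p ξ hp
  have h3 : ‖w ξ‖ * ‖Eker k H p ξ‖ ≤ C * (1 + |ξ|) ^ n := by
    calc ‖w ξ‖ * ‖Eker k H p ξ‖ ≤ (C * (1 + |ξ|) ^ n) * 1 :=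
          mul_le_mul h1 h2 (norm_nonneg _) (le_trans (norm_nonneg _) h1)
      _ = C * (1 + |ξ|) ^ n := mul_one _
  exact mul_le_mul_of_nonneg_right h3 (norm_nonneg _)

lemma integrable_integrand {w : ℝ → ℂ} {C n} (hw : GoodW w C n) (k H : ℝ) (g : SchwartzMap ℝ ℂ)
    (p : ℝ × ℝ) (hp : H ≤ p.2) :
    Integrable (fun ξ => w ξ * Eker k H p ξ * g ξ) := by
  refine (integrable_poly_mul g C n).mono'
    (((hw.cont.mul (continuous_Eker k H p)).mul g.continuous).aestronglyMeasurable) ?_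
  filter_upwards with ξ
  exact norm_integrand_le hw k H g p hp ξ

lemma GoodW.w1 {w C n} (hw : GoodW w C n) (k : ℝ) (hk : 0 ≤ k) :
    GoodW (fun ξ => Complex.I * ξ * w ξ) (2 * (1 + k) * C) (n + 1) := by
  constructor
  · exact (continuous_const.mul Complex.continuous_ofReal).mul hw.cont
  · intro ξ
    rw [norm_mul, norm_mul, Complex.norm_I, one_mul, Complex.norm_real, Real.norm_eq_abs]
    have h1 := hw.bound ξ
    have hC := hw.C_nonneg
    have h2 : (0:ℝ) ≤ (1 + |ξ|) ^ n := by positivity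
    have h3 : |ξ| ≤ 2 * (1 + k) * (1 + |ξ|) := by nlinarith [abs_nonneg ξ]
    calc |ξ| * ‖w ξ‖ ≤ (2 * (1 + k) * (1 + |ξ|)) * (C * (1 + |ξ|) ^ n) :=
          mul_le_mul h3 h1 (norm_nonneg _) (by positivity)
      _ = 2 * (1 + k) * C * (1 + |ξ|) ^ (n + 1) := by ring

lemma GoodW.w2 {w C n} (hw : GoodW w C n) (k : ℝ) (hk : 0 ≤ k) :
    GoodW (fun ξ => Complex.I * betaSym k ξ * w ξ) (2 * (1 + k) * C) (n + 1) := by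
  constructor
  · exact (continuous_const.mul (continuous_betaSym k)).mul hw.cont
  · intro ξ
    rw [norm_mul, norm_mul, Complex.norm_I, one_mul]
    have h1 := hw.bound ξ
    have hb := norm_betaSym_le k ξ hk
    have hC := hw.C_nonneg
    have h2 : (0:ℝ) ≤ (1 + |ξ|) ^ n := by positivity
    have h3 : k + |ξ| ≤ 2 * (1 + k) * (1 + |ξ|) := by nlinarith [abs_nonneg ξ]
    calc ‖betaSym k ξ‖ * ‖w ξ‖ ≤ (2 * (1 + k) * (1 + |ξ|)) * (C * (1 + |ξ|) ^ n) :=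
          mul_le_mul (le_trans hb h3) h1 (norm_nonneg _) (by positivity)
      _ = 2 * (1 + k) * C * (1 + |ξ|) ^ (n + 1) := by ring

noncomputable def Dmap (k H : ℝ) (g : SchwartzMap ℝ ℂ) (w : ℝ → ℂ) (p : ℝ × ℝ) :
    ℝ × ℝ →L[ℝ] ℂ :=
  (ContinuousLinearMap.fst ℝ ℝ ℝ).smulRight (Uw k H g (fun ξ => Complex.I * ξ * w ξ) p)
  + (ContinuousLinearMap.snd ℝ ℝ ℝ).smulRight (Uw k H g (fun ξ => Complex.I * betaSym k ξ * w ξ) p)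

lemma key (k H : ℝ) (hk : 0 < k) (g : SchwartzMap ℝ ℂ) {w : ℝ → ℂ} {C n}
    (hw : GoodW w C n) (p : ℝ × ℝ) (hp : H < p.2) :
    HasFDerivAt (Uw k H g w) (Dmap k H g w p) p := by
  set ε := (p.2 - H) / 2 with hε
  have εpos : 0 < ε := by simp [hε]; linarith
  have hball : ∀ q ∈ Metric.ball p ε, H < q.2 := by
    intro q hq
    rw [Metric.mem_ball] at hq
    have h1 : |q.2 - p.2| ≤ ‖q - p‖ := by
      calc |q.2 - p.2| = ‖(q - p).2‖ := by rfl
        _ ≤ ‖q - p‖ := norm_snd_le _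
    rw [dist_eq_norm] at hq
    have := abs_lt.mp (lt_of_le_of_lt h1 hq)
    simp [hε] at this ⊢
    linarith [this.1]
  -- the derivative candidates
  set F' : (ℝ × ℝ) → ℝ → (ℝ × ℝ →L[ℝ] ℂ) := fun q ξ =>
    (ContinuousLinearMap.fst ℝ ℝ ℝ).smulRight ((Complex.I * ξ * w ξ) * Eker k H q ξ * g ξ)
    + (ContinuousLinearMap.snd ℝ ℝ ℝ).smulRight
        ((Complex.I * betaSym k ξ * w ξ) * Eker k H q ξ * g ξ) with hF'
  have hw1 := hw.w1 k hk.le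
  have hw2 := hw.w2 k hk.le
  have hmain : HasFDerivAt (fun q => ∫ ξ : ℝ, w ξ * Eker k H q ξ * g ξ)
      (∫ ξ : ℝ, F' p ξ) p := by
    apply hasFDerivAt_integral_of_dominated_of_fderiv_le
      (bound := fun ξ => 2 * (2 * (1 + k) * C) * (1 + |ξ|) ^ (n + 1) * ‖g ξ‖) (Metric.ball_mem_nhds p εpos)
    · filter_upwards with q
      exact ((hw.cont.mul (continuous_Eker k H q)).mul g.continuous).aestronglyMeasurable
    · exact integrable_integrand hw k H g p hp.le
    · apply Continuous.aestronglyMeasurable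
      apply Continuous.add
      · exact ((ContinuousLinearMap.smulRightL ℝ (ℝ × ℝ) ℂ
          (ContinuousLinearMap.fst ℝ ℝ ℝ)).continuous).comp
          ((hw1.cont.mul (continuous_Eker k H p)).mul g.continuous)
      · exact ((ContinuousLinearMap.smulRightL ℝ (ℝ × ℝ) ℂ
          (ContinuousLinearMap.snd ℝ ℝ ℝ)).continuous).comp
          ((hw2.cont.mul (continuous_Eker k H p)).mul g.continuous)
    · filter_upwards with ξ
      intro q hq
      have hq2 : H ≤ q.2 := (hball q hq).le
      have hfst : ‖(ContinuousLinearMap.fst ℝ ℝ ℝ)‖ ≤ 1 :=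
        ContinuousLinearMap.opNorm_le_bound _ zero_le_one (fun v => by
          simpa using norm_fst_le v)
      have hsnd : ‖(ContinuousLinearMap.snd ℝ ℝ ℝ)‖ ≤ 1 :=
        ContinuousLinearMap.opNorm_le_bound _ zero_le_one (fun v => by
          simpa using norm_snd_le v)
      have ha := norm_integrand_le hw1 k H g q hq2 ξ
      have hb := norm_integrand_le hw2 k H g q hq2 ξ
      calc ‖F' q ξ‖ ≤ ‖(ContinuousLinearMap.fst ℝ ℝ ℝ).smulRight
              ((Complex.I * ξ * w ξ) * Eker k H q ξ * g ξ)‖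
            + ‖(ContinuousLinearMap.snd ℝ ℝ ℝ).smulRight
              ((Complex.I * betaSym k ξ * w ξ) * Eker k H q ξ * g ξ)‖ := norm_add_le _ _
        _ ≤ 1 * ‖(Complex.I * ξ * w ξ) * Eker k H q ξ * g ξ‖
            + 1 * ‖(Complex.I * betaSym k ξ * w ξ) * Eker k H q ξ * g ξ‖ := by
            rw [ContinuousLinearMap.norm_smulRight_apply, ContinuousLinearMap.norm_smulRight_apply]
            exact add_le_add (mul_le_mul_of_nonneg_right hfst (norm_nonneg _))
              (mul_le_mul_of_nonneg_right hsnd (norm_nonneg _))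
        _ ≤ 1 * (2 * (1 + k) * C * (1 + |ξ|) ^ (n+1) * ‖g ξ‖)
            + 1 * (2 * (1 + k) * C * (1 + |ξ|) ^ (n+1) * ‖g ξ‖) := by gcongr
        _ = 2 * (2 * (1 + k) * C) * (1 + |ξ|) ^ (n + 1) * ‖g ξ‖ := by ring
    · exact integrable_poly_mul g (2 * (2 * (1 + k) * C)) (n+1)
    · filter_upwards with ξ
      intro q hq
      exact hasFDerivAt_integrand k H (w ξ) (g ξ) ξ q
  have hia := integrable_integrand hw1 k H g p hp.le
  have hib := integrable_integrand hw2 k H g p hp.le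
  have e1 := (ContinuousLinearMap.smulRightL ℝ (ℝ × ℝ) ℂ
    (ContinuousLinearMap.fst ℝ ℝ ℝ)).integral_comp_comm hia
  have e2 := (ContinuousLinearMap.smulRightL ℝ (ℝ × ℝ) ℂ
    (ContinuousLinearMap.snd ℝ ℝ ℝ)).integral_comp_comm hib
  have heq : (∫ ξ : ℝ, F' p ξ) = Dmap k H g w p := by
    have hFeq : (fun ξ : ℝ => F' p ξ) = fun ξ : ℝ =>
        (ContinuousLinearMap.smulRightL ℝ (ℝ × ℝ) ℂ (ContinuousLinearMap.fst ℝ ℝ ℝ))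
          (Complex.I * ξ * w ξ * Eker k H p ξ * g ξ)
        + (ContinuousLinearMap.smulRightL ℝ (ℝ × ℝ) ℂ (ContinuousLinearMap.snd ℝ ℝ ℝ))
          (Complex.I * betaSym k ξ * w ξ * Eker k H p ξ * g ξ) := rfl
    rw [hFeq]
    rw [integral_add
      ((ContinuousLinearMap.smulRightL ℝ (ℝ × ℝ) ℂ
        (ContinuousLinearMap.fst ℝ ℝ ℝ)).integrable_comp hia)
      ((ContinuousLinearMap.smulRightL ℝ (ℝ × ℝ) ℂ
        (ContinuousLinearMap.snd ℝ ℝ ℝ)).integrable_comp hib)]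
    rw [e1, e2]
    rfl
  exact heq ▸ hmain

lemma Dmap_apply1 (k H : ℝ) (g : SchwartzMap ℝ ℂ) (w : ℝ → ℂ) (q : ℝ × ℝ) :
    (Dmap k H g w q) ((1:ℝ), (0:ℝ)) = Uw k H g (fun ξ => Complex.I * ξ * w ξ) q := by
  simp [Dmap]

lemma Dmap_apply2 (k H : ℝ) (g : SchwartzMap ℝ ℂ) (w : ℝ → ℂ) (q : ℝ × ℝ) :
    (Dmap k H g w q) ((0:ℝ), (1:ℝ)) = Uw k H g (fun ξ => Complex.I * betaSym k ξ * w ξ) q := by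
  simp [Dmap]

lemma Uw_add (k H : ℝ) (g : SchwartzMap ℝ ℂ) (w1 w2 : ℝ → ℂ) (p : ℝ × ℝ)
    (h1 : Integrable (fun ξ => w1 ξ * Eker k H p ξ * g ξ))
    (h2 : Integrable (fun ξ => w2 ξ * Eker k H p ξ * g ξ)) :
    Uw k H g w1 p + Uw k H g w2 p = Uw k H g (fun ξ => w1 ξ + w2 ξ) p := by
  unfold Uw
  rw [← integral_add h1 h2]
  congr 1
  funext ξ
  ring

lemma Uw_smul (k H : ℝ) (g : SchwartzMap ℝ ℂ) (w : ℝ → ℂ) (a : ℂ) (p : ℝ × ℝ) :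
    a * Uw k H g w p = Uw k H g (fun ξ => a * w ξ) p := by
  unfold Uw
  rw [← integral_const_mul]
  congr 1
  funext ξ
  ring

lemma Uw_zero (k H : ℝ) (g : SchwartzMap ℝ ℂ) (w : ℝ → ℂ) (p : ℝ × ℝ)
    (h : ∀ ξ, w ξ = 0) : Uw k H g w p = 0 := by
  unfold Uw
  have : (fun ξ : ℝ => w ξ * Eker k H p ξ * g ξ) = fun _ => 0 := by
    funext ξ; rw [h ξ]; ring
  rw [this, integral_zero]

lemma helm_zero (k H : ℝ) (hk : 0 ≤ k) (g : SchwartzMap ℝ ℂ) (p : ℝ × ℝ) (hp : H ≤ p.2) :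
    Uw k H g (fun ξ : ℝ => Complex.I * ξ * (Complex.I * ξ * 1)) p
    + Uw k H g (fun ξ : ℝ => Complex.I * betaSym k ξ * (Complex.I * betaSym k ξ * 1)) p
    + (k:ℂ)^2 * Uw k H g (fun _ : ℝ => (1:ℂ)) p = 0 := by
  have hgw0 : GoodW (fun _ : ℝ => (1:ℂ)) 1 0 := ⟨continuous_const, fun ξ => by simp⟩
  have hi1 : Integrable (fun ξ : ℝ =>
      (Complex.I * ξ * (Complex.I * ξ * 1)) * Eker k H p ξ * g ξ) :=
    integrable_integrand ((hgw0.w1 k hk).w1 k hk) k H g p hp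
  have hi2 : Integrable (fun ξ : ℝ =>
      (Complex.I * betaSym k ξ * (Complex.I * betaSym k ξ * 1)) * Eker k H p ξ * g ξ) :=
    integrable_integrand ((hgw0.w2 k hk).w2 k hk) k H g p hp
  have hisum : Integrable (fun ξ : ℝ =>
      (Complex.I * ξ * (Complex.I * ξ * 1) + Complex.I * betaSym k ξ * (Complex.I * betaSym k ξ * 1))
        * Eker k H p ξ * g ξ) :=
    (hi1.add hi2).congr (Filter.Eventually.of_forall fun ξ => by simp only [Pi.add_apply]; ring)
  have hik : Integrable (fun ξ : ℝ => ((k:ℂ)^2 * 1) * Eker k H p ξ * g ξ) := by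
    refine integrable_integrand (GoodW.mk (w := fun _ : ℝ => (k:ℂ)^2 * 1) (C := k^2) (n := 0)
      continuous_const (fun ξ => ?_)) k H g p hp
    rw [mul_one, pow_zero, mul_one,
      show ((k:ℂ)^2) = ((k^2 : ℝ) : ℂ) from by push_cast; ring,
      Complex.norm_real, Real.norm_eq_abs, _root_.abs_of_nonneg (by positivity)]
  rw [Uw_add k H g _ _ p hi1 hi2, Uw_smul, Uw_add k H g _ _ p hisum hik]
  apply Uw_zero
  intro ξ
  have hb := betaSym_sq k ξ hk
  have hI := Complex.I_sq
  linear_combination (((ξ:ℂ))^2 + betaSym k ξ^2) * hI - hb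

/-- The upward propagating field
`u(x₁, x₂) = (1/(2π)) ∫_ℝ e^{iξx₁ + iβ(ξ)(x₂ - H)} ĝ(ξ) dξ`. -/
noncomputable def uRad (k H : ℝ) (g : SchwartzMap ℝ ℂ) (p : ℝ × ℝ) : ℂ :=
  (1 / (2 * (Real.pi : ℂ))) *
    ∫ ξ : ℝ, Complex.exp (Complex.I * ξ * p.1 + Complex.I * betaSym k ξ * (p.2 - H)) * g ξ

/-- On the open half-plane `{x₂ > H}` the field `u` is twice continuously differentiable
and satisfies the Helmholtz equation `∂²u/∂x₁² + ∂²u/∂x₂² + k²u = 0`. -/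
theorem uRad_helmholtz (k H : ℝ) (hk : 0 < k) (g : SchwartzMap ℝ ℂ) :
    ContDiffOn ℝ 2 (uRad k H g) {p : ℝ × ℝ | H < p.2} ∧
    ∀ p ∈ {p : ℝ × ℝ | H < p.2},
      fderiv ℝ (fun q : ℝ × ℝ => fderiv ℝ (uRad k H g) q (1, 0)) p (1, 0) +
        fderiv ℝ (fun q : ℝ × ℝ => fderiv ℝ (uRad k H g) q (0, 1)) p (0, 1) +
        (k : ℂ) ^ 2 * uRad k H g p = 0 := by
  have hSopen : IsOpen {p : ℝ × ℝ | H < p.2} := isOpen_lt continuous_const continuous_snd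
  set c : ℂ := 1 / (2 * (Real.pi : ℂ)) with hc
  have hgw0 : GoodW (fun _ : ℝ => (1:ℂ)) 1 0 := ⟨continuous_const, fun ξ => by simp⟩
  have hu_eq : uRad k H g = fun p => c • Uw k H g (fun _ : ℝ => (1:ℂ)) p := by
    funext p
    simp only [uRad, Uw, Eker, one_mul, smul_eq_mul, hc]
  have hu' : ∀ q ∈ {p : ℝ × ℝ | H < p.2},
      HasFDerivAt (uRad k H g) (c • Dmap k H g (fun _ : ℝ => (1:ℂ)) q) q := by
    intro q hq
    rw [hu_eq]
    exact (key k H hk g hgw0 q hq).const_smul c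
  have hUcont : ∀ {w : ℝ → ℂ} {C : ℝ} {n : ℕ}, GoodW w C n →
      ContinuousOn (Uw k H g w) {p : ℝ × ℝ | H < p.2} := by
    intro w C n hw q hq
    exact ((key k H hk g hw q hq).continuousAt).continuousWithinAt
  set A := ContinuousLinearMap.smulRightL ℝ (ℝ × ℝ) ℂ (ContinuousLinearMap.fst ℝ ℝ ℝ) with hA
  set B := ContinuousLinearMap.smulRightL ℝ (ℝ × ℝ) ℂ (ContinuousLinearMap.snd ℝ ℝ ℝ) with hB
  have hD' : ∀ {w : ℝ → ℂ} {C : ℝ} {n : ℕ}, GoodW w C n → ∀ q ∈ {p : ℝ × ℝ | H < p.2},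
      HasFDerivAt (fun q => Dmap k H g w q)
        (A.comp (Dmap k H g (fun ξ => Complex.I * ξ * w ξ) q)
          + B.comp (Dmap k H g (fun ξ => Complex.I * betaSym k ξ * w ξ) q)) q := by
    intro w C n hw q hq
    have h1 := A.hasFDerivAt.comp q (key k H hk g (hw.w1 k hk.le) q hq)
    have h2 := B.hasFDerivAt.comp q (key k H hk g (hw.w2 k hk.le) q hq)
    exact h1.add h2
  have hDcont : ∀ {w : ℝ → ℂ} {C : ℝ} {n : ℕ}, GoodW w C n →
      ContinuousOn (fun q => Dmap k H g w q) {p : ℝ × ℝ | H < p.2} := by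
    intro w C n hw
    exact (A.continuous.comp_continuousOn (hUcont (hw.w1 k hk.le))).add
      (B.continuous.comp_continuousOn (hUcont (hw.w2 k hk.le)))
  constructor
  · intro p hp
    apply ContDiffAt.contDiffWithinAt
    rw [show (2 : WithTop ℕ∞) = ((1:ℕ) : WithTop ℕ∞) + 1 from by norm_num,
      contDiffAt_succ_iff_hasFDerivAt]
    refine ⟨fun q => c • Dmap k H g (fun _ : ℝ => (1:ℂ)) q,
      ⟨_, hSopen.mem_nhds hp, fun q hq => hu' q hq⟩, ?_⟩
    rw [show ((1:ℕ) : WithTop ℕ∞) = ((0:ℕ) : WithTop ℕ∞) + 1 from by norm_num,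
      contDiffAt_succ_iff_hasFDerivAt]
    refine ⟨fun q => c • (A.comp (Dmap k H g (fun ξ => Complex.I * ξ * (fun _ : ℝ => (1:ℂ)) ξ) q)
        + B.comp (Dmap k H g (fun ξ => Complex.I * betaSym k ξ * (fun _ : ℝ => (1:ℂ)) ξ) q)),
      ⟨_, hSopen.mem_nhds hp, fun q hq => (hD' hgw0 q hq).const_smul c⟩, ?_⟩
    rw [show (((0:ℕ)) : WithTop ℕ∞) = (0 : WithTop ℕ∞) from rfl, contDiffAt_zero]
    refine ⟨_, hSopen.mem_nhds hp, ?_⟩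
    apply ContinuousOn.fun_const_smul
    apply ContinuousOn.add
    · exact (ContinuousLinearMap.compL ℝ (ℝ × ℝ) ℂ ((ℝ × ℝ) →L[ℝ] ℂ) A).continuous.comp_continuousOn
        (hDcont (hgw0.w1 k hk.le))
    · exact (ContinuousLinearMap.compL ℝ (ℝ × ℝ) ℂ ((ℝ × ℝ) →L[ℝ] ℂ) B).continuous.comp_continuousOn
        (hDcont (hgw0.w2 k hk.le))
  · intro p hp
    have hS : {p : ℝ × ℝ | H < p.2} ∈ nhds p := hSopen.mem_nhds hp
    have hEv1 : (fun q : ℝ × ℝ => fderiv ℝ (uRad k H g) q (1, 0))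
        =ᶠ[nhds p] fun q => c • Uw k H g (fun ξ => Complex.I * ξ * (fun _ : ℝ => (1:ℂ)) ξ) q := by
      filter_upwards [hS] with q hq
      rw [(hu' q hq).fderiv, ContinuousLinearMap.smul_apply, Dmap_apply1]
    have hEv2 : (fun q : ℝ × ℝ => fderiv ℝ (uRad k H g) q (0, 1))
        =ᶠ[nhds p] fun q => c • Uw k H g
          (fun ξ => Complex.I * betaSym k ξ * (fun _ : ℝ => (1:ℂ)) ξ) q := by
      filter_upwards [hS] with q hq
      rw [(hu' q hq).fderiv, ContinuousLinearMap.smul_apply, Dmap_apply2]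
    have hfd1 : fderiv ℝ (fun q : ℝ × ℝ => fderiv ℝ (uRad k H g) q (1, 0)) p (1, 0)
        = c • Uw k H g (fun ξ => Complex.I * ξ
            * ((fun ξ => Complex.I * ξ * (fun _ : ℝ => (1:ℂ)) ξ) ξ)) p := by
      rw [hEv1.fderiv_eq,
        ((key k H hk g (hgw0.w1 k hk.le) p hp).fun_const_smul c).fderiv,
        ContinuousLinearMap.smul_apply, Dmap_apply1]
    have hfd2 : fderiv ℝ (fun q : ℝ × ℝ => fderiv ℝ (uRad k H g) q (0, 1)) p (0, 1)
        = c • Uw k H g (fun ξ => Complex.I * betaSym k ξ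
            * ((fun ξ => Complex.I * betaSym k ξ * (fun _ : ℝ => (1:ℂ)) ξ) ξ)) p := by
      rw [hEv2.fderiv_eq,
        ((key k H hk g (hgw0.w2 k hk.le) p hp).fun_const_smul c).fderiv,
        ContinuousLinearMap.smul_apply, Dmap_apply2]
    rw [hfd1, hfd2, hu_eq]
    have hz := helm_zero k H hk.le g p hp.out.le
    beta_reduce
    simp only [smul_eq_mul]
    linear_combination c * hz
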